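/- The set M_{t_{ij}} = { x ∈ ℝ⁴ : x₁x₄ − x₂x₃ = 0 and q_{t_{ij}}(x) ≠ 0 } is a group under the generalized bicomplex product: it contains the identity e = (1,0,0,0), it is closed under the product, and every x ∈ M_{t_{ij}} has inverse x⁻¹ = (1/q_{t_{ij}}(x))·(x₁, −x₂, −x₃, x₄), which again lies in M_{t_{ij}}. -/

import Mathlib

/-- The generalized bicomplex product on ℝ⁴ with parameters α, β. -/
def gbmul (α β : ℝ) (x y : ℝ × ℝ × ℝ × ℝ) : ℝ × ℝ × ℝ × ℝ :=
  (x.1 * y.1 - α * x.2.1 * y.2.1 - β * x.2.2.1 * y.2.2.1 + α * β * x.2.2.2 * y.2.2.2,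
   x.1 * y.2.1 + x.2.1 * y.1 - β * x.2.2.1 * y.2.2.2 - β * x.2.2.2 * y.2.2.1,
   x.1 * y.2.2.1 + x.2.2.1 * y.1 - α * x.2.1 * y.2.2.2 - α * x.2.2.2 * y.2.1,
   x.1 * y.2.2.2 + x.2.2.2 * y.1 + x.2.1 * y.2.2.1 + x.2.2.1 * y.2.1)

/-- The quadratic form associated with the conjugation. -/
def qTij (α β : ℝ) (x : ℝ × ℝ × ℝ × ℝ) : ℝ := x.1 ^ 2 + α * x.2.1 ^ 2 + β * x.2.2.1 ^ 2 + α * β * x.2.2.2 ^ 2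

/-!
The determinant `x₁x₄ − x₂x₃` and the form `q = q_{t_{ij}}` satisfy the product rules
`det (x y) = q x · det y + q y · det x` and `q (x y) = q x · q y + 4αβ · det x · det y`,
so on the hyperquadric `det = 0` the form `q` is multiplicative and `det` stays zero.
Moreover `x̄ · x = (q x, 0, 0, 2 det x)` for the conjugate `x̄ = (x₁, −x₂, −x₃, x₄)`,
so `x̄ / q x` is an inverse of `x` on the hyperquadric (the product is commutative).
-/

def gbconj (x : ℝ × ℝ × ℝ × ℝ) : ℝ × ℝ × ℝ × ℝ := (x.1, -x.2.1, -x.2.2.1, x.2.2.2)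

def gbdet (x : ℝ × ℝ × ℝ × ℝ) : ℝ := x.1 * x.2.2.2 - x.2.1 * x.2.2.1

def hyperquadric (α β : ℝ) : Set (ℝ × ℝ × ℝ × ℝ) := {x | gbdet x = 0 ∧ qTij α β x ≠ 0}

section

variable (α β : ℝ)

theorem gbmul_comm (x y : ℝ × ℝ × ℝ × ℝ) : gbmul α β x y = gbmul α β y x := by
  simp only [gbmul, Prod.mk.injEq]
  refine ⟨?_, ?_, ?_, ?_⟩ <;> ring

theorem smul_gbmul (c : ℝ) (x y : ℝ × ℝ × ℝ × ℝ) :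
    gbmul α β (c • x) y = c • gbmul α β x y := by
  ext <;> simp only [gbmul, Prod.smul_fst, Prod.smul_snd, smul_eq_mul] <;> ring

theorem gbdet_gbmul (x y : ℝ × ℝ × ℝ × ℝ) :
    gbdet (gbmul α β x y) = qTij α β x * gbdet y + qTij α β y * gbdet x := by
  simp only [gbdet, gbmul, qTij]
  ring

theorem qTij_gbmul (x y : ℝ × ℝ × ℝ × ℝ) :
    qTij α β (gbmul α β x y) = qTij α β x * qTij α β y + 4 * α * β * gbdet x * gbdet y := by
  simp only [gbdet, gbmul, qTij]
  ring

theorem gbconj_gbmul_self (x : ℝ × ℝ × ℝ × ℝ) :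
    gbmul α β (gbconj x) x = (qTij α β x, 0, 0, 2 * gbdet x) := by
  simp only [gbmul, gbconj, qTij, gbdet, Prod.mk.injEq]
  refine ⟨?_, ?_, ?_, ?_⟩ <;> ring

theorem qTij_smul (c : ℝ) (x : ℝ × ℝ × ℝ × ℝ) : qTij α β (c • x) = c ^ 2 * qTij α β x := by
  simp only [qTij, Prod.smul_fst, Prod.smul_snd, smul_eq_mul]
  ring

theorem qTij_gbconj (x : ℝ × ℝ × ℝ × ℝ) : qTij α β (gbconj x) = qTij α β x := by
  simp only [qTij, gbconj]
  ring

end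

theorem gbdet_smul (c : ℝ) (x : ℝ × ℝ × ℝ × ℝ) : gbdet (c • x) = c ^ 2 * gbdet x := by
  simp only [gbdet, Prod.smul_fst, Prod.smul_snd, smul_eq_mul]
  ring

theorem gbdet_gbconj (x : ℝ × ℝ × ℝ × ℝ) : gbdet (gbconj x) = gbdet x := by
  simp only [gbdet, gbconj]
  ring

namespace hyperquadric

variable {α β : ℝ}

theorem one_mem : ((1, 0, 0, 0) : ℝ × ℝ × ℝ × ℝ) ∈ hyperquadric α β := by
  simp [hyperquadric, gbdet, qTij]

theorem gbmul_mem {x y : ℝ × ℝ × ℝ × ℝ} (hx : x ∈ hyperquadric α β) (hy : y ∈ hyperquadric α β) :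
    gbmul α β x y ∈ hyperquadric α β := by
  obtain ⟨hdx, hqx⟩ := hx
  obtain ⟨hdy, hqy⟩ := hy
  refine ⟨?_, ?_⟩
  · rw [gbdet_gbmul, hdx, hdy]
    ring
  · rw [qTij_gbmul, hdx]
    simpa using mul_ne_zero hqx hqy

theorem inv_smul_gbconj_mem {x : ℝ × ℝ × ℝ × ℝ} (hx : x ∈ hyperquadric α β) :
    (qTij α β x)⁻¹ • gbconj x ∈ hyperquadric α β := by
  obtain ⟨hd, hq⟩ := hx
  refine ⟨?_, ?_⟩
  · rw [gbdet_smul, gbdet_gbconj, hd, mul_zero]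
  · rw [qTij_smul, qTij_gbconj]
    exact mul_ne_zero (pow_ne_zero 2 (inv_ne_zero hq)) hq

theorem inv_smul_gbconj_gbmul {x : ℝ × ℝ × ℝ × ℝ} (hx : x ∈ hyperquadric α β) :
    gbmul α β ((qTij α β x)⁻¹ • gbconj x) x = (1, 0, 0, 0) := by
  obtain ⟨hd, hq⟩ := hx
  rw [smul_gbmul, gbconj_gbmul_self, hd]
  simp [hq]

end hyperquadric

/-- The hyperquadric is a group under the generalized bicomplex product: it
contains the identity `(1,0,0,0)`, is closed under the product, and every
element has a two-sided inverse (again lying in the hyperquadric) given by the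
scaled conjugate. -/
theorem hyperquadric_group (α β : ℝ) :
    let M : Set (ℝ × ℝ × ℝ × ℝ) :=
      {x | x.1 * x.2.2.2 - x.2.1 * x.2.2.1 = 0 ∧ qTij α β x ≠ 0}
    let e : ℝ × ℝ × ℝ × ℝ := (1, 0, 0, 0)
    e ∈ M ∧
    (∀ x ∈ M, ∀ y ∈ M, gbmul α β x y ∈ M) ∧
    (∀ x ∈ M,
      ((qTij α β x)⁻¹ • ((x.1, -x.2.1, -x.2.2.1, x.2.2.2) : ℝ × ℝ × ℝ × ℝ)) ∈ M ∧
      gbmul α β x ((qTij α β x)⁻¹ • ((x.1, -x.2.1, -x.2.2.1, x.2.2.2) : ℝ × ℝ × ℝ × ℝ)) = e ∧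
      gbmul α β ((qTij α β x)⁻¹ • ((x.1, -x.2.1, -x.2.2.1, x.2.2.2) : ℝ × ℝ × ℝ × ℝ)) x = e) := by
  intro M e
  refine ⟨hyperquadric.one_mem, fun x hx y hy => hyperquadric.gbmul_mem hx hy, fun x hx => ?_⟩
  have hinv : gbmul α β ((qTij α β x)⁻¹ • gbconj x) x = e := hyperquadric.inv_smul_gbconj_gbmul hx
  exact ⟨hyperquadric.inv_smul_gbconj_mem hx, (gbmul_comm α β _ _).trans hinv, hinv⟩
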